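/- arXiv:1909.08373 — 4 statements merged into one kernel-verified Lean document; each statement's English description precedes it below -/
import Mathlib

section
/- Let D be a weakly connected and finitely separable digraph and let v, w be distinct vertices with v ∼ w. If W is a finite inclusion-minimal witness for v ∼ w, then the subdigraph of D induced by the edge set W (whose vertices are the vertices incident with edges of W) is strongly connected. -/
/-- A digraph with vertex type `V` and edge type `E`, allowing parallel edges. -/
structure MultiDigraph (V : Type*) (E : Type*) where
  tail : E → V
  head : E → V

namespace MultiDigraph

variable {V : Type*} {E : Type*} (D : MultiDigraph V E)

/-- Adjacency in the underlying undirected multigraph. -/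
def Adj (u v : V) : Prop :=
  ∃ e : E, (D.tail e = u ∧ D.head e = v) ∨ (D.tail e = v ∧ D.head e = u)

/-- The underlying undirected multigraph is connected. -/
def WeaklyConnected : Prop :=
  ∀ u v : V, Relation.ReflTransGen D.Adj u v

/-- `B` is the dicut of `D` whose in-shore is `X` (every edge of the cut has its
head in `X`, and no edge leaves `X`). -/
def DicutWith (X : Set V) (B : Set E) : Prop :=
  (∀ e : E, D.tail e ∈ X → D.head e ∈ X) ∧
    B = {e : E | D.tail e ∉ X ∧ D.head e ∈ X}

/-- `B` is a dicut of `D`. -/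
def IsDicut (B : Set E) : Prop :=
  ∃ X : Set V, D.DicutWith X B

/-- A dibond is a minimal non-empty dicut. -/
def IsDibond (B : Set E) : Prop :=
  D.IsDicut B ∧ B.Nonempty ∧
    ∀ B' : Set E, D.IsDicut B' → B'.Nonempty → B' ⊆ B → B' = B

/-- A dijoin meets every non-empty dicut. -/
def Dijoin (F : Set E) : Prop :=
  ∀ B : Set E, D.IsDicut B → B.Nonempty → (F ∩ B).Nonempty

/-- A finitary dijoin meets every non-empty finite dicut. -/
def FinitaryDijoin (F : Set E) : Prop :=
  ∀ B : Set E, D.IsDicut B → B.Finite → B.Nonempty → (F ∩ B).Nonempty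

/-- Two dicuts are nested if they have witnessing sides one of which is
`⊆`-comparable with a side of the other. -/
def NestedDicuts (B₁ B₂ : Set E) : Prop :=
  ∃ X₁ X₂ : Set V, D.DicutWith X₁ B₁ ∧ D.DicutWith X₂ B₂ ∧
    (X₁ ⊆ X₂ ∨ X₂ ⊆ X₁ ∨ X₁ ⊆ X₂ᶜ ∨ X₂ᶜ ⊆ X₁)

/-- An optimal pair: a set `ℬ` of pairwise disjoint finite dicuts and a finitary
dijoin `F ⊆ ⋃ ℬ` meeting each member of `ℬ` in exactly one edge. -/
def OptimalPair (F : Set E) (ℬ : Set (Set E)) : Prop :=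
  (∀ B ∈ ℬ, D.IsDicut B ∧ B.Finite) ∧
    ℬ.Pairwise Disjoint ∧
    D.FinitaryDijoin F ∧
    F ⊆ ⋃₀ ℬ ∧
    ∀ B ∈ ℬ, (F ∩ B).ncard = 1

/-- A nested optimal pair. -/
def NestedOptimalPair (F : Set E) (ℬ : Set (Set E)) : Prop :=
  D.OptimalPair F ℬ ∧ ℬ.Pairwise D.NestedDicuts

/-- The underlying multigraph contains no ray. -/
def Rayless : Prop :=
  ¬ ∃ f : ℕ → V, Function.Injective f ∧ ∀ n : ℕ, D.Adj (f n) (f (n + 1))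

/-- The (undirected) cut of `D` with side `X`: all edges with exactly one
endpoint in `X`. -/
def cutEdges (X : Set V) : Set E :=
  {e : E | (D.tail e ∈ X ∧ D.head e ∉ X) ∨ (D.tail e ∉ X ∧ D.head e ∈ X)}

/-- Any two distinct vertices are separated by a finite cut. -/
def FinitelySeparable : Prop :=
  ∀ v w : V, v ≠ w → ∃ X : Set V, (D.cutEdges X).Finite ∧ v ∈ X ∧ w ∉ X

/-- Any two distinct vertices lie on different sides of some finite dicut. -/
def FinitelyDiseparable : Prop :=
  ∀ v w : V, v ≠ w → ∃ (X : Set V) (B : Set E), D.DicutWith X B ∧ B.Finite ∧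
    ((v ∈ X ∧ w ∉ X) ∨ (v ∉ X ∧ w ∈ X))

/-- The underlying multigraph is 2-connected: it is connected and deleting any
single vertex keeps it connected. -/
def UnderlyingTwoConnected : Prop :=
  D.WeaklyConnected ∧ ∀ x u v : V, u ≠ x → v ≠ x →
    Relation.ReflTransGen (fun a b => a ≠ x ∧ b ≠ x ∧ D.Adj a b) u v

/-- `v ∼ w`: no finite dicut of `D` separates `v` and `w`. -/
def Sim (v w : V) : Prop :=
  ∀ (X : Set V) (B : Set E), D.DicutWith X B → B.Finite → (v ∈ X ↔ w ∈ X)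

/-- `W` is a witness for `v ∼ w`: it meets every finite cut separating `v`
and `w` in both directions. -/
def Witness (v w : V) (W : Set E) : Prop :=
  ∀ X : Set V, (D.cutEdges X).Finite → v ∈ X → w ∉ X →
    (∃ e ∈ W, D.tail e ∈ X ∧ D.head e ∉ X) ∧
    (∃ e ∈ W, D.tail e ∉ X ∧ D.head e ∈ X)

end MultiDigraph


/-!
A finite witness `W` for `v ∼ w` in a finitely separable digraph has a directed `W`-path from
`v` to `w`: otherwise the vertices `W`-reachable from `v` agree, on the finitely many vertices
that matter, with a side `X` of a finite cut, and no edge of `W` leaves `X`. By symmetry there is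
also a `W`-path back, and conversely any edge set containing both paths is a witness. The edges
of `W` inside the strong component of `v` therefore form a witness, so by minimality they are
all of `W`, and every vertex incident with `W` lies in that strong component.
-/

namespace MultiDigraph

variable {V E : Type*} (D : MultiDigraph V E)

def Arc (W : Set E) (a b : V) : Prop :=
  ∃ e ∈ W, D.tail e = a ∧ D.head e = b

def Reachable (W : Set E) : V → V → Prop :=
  Relation.ReflTransGen (D.Arc W)

def strongComponent (W : Set E) (v : V) : Set V :=
  {a | D.Reachable W v a ∧ D.Reachable W a v}

variable {D}

lemma cutEdges_compl (X : Set V) : D.cutEdges Xᶜ = D.cutEdges X := by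
  ext e
  simp only [cutEdges, Set.mem_ofPred_eq, Set.mem_compl_iff, not_not]
  tauto

lemma cutEdges_biInter_subset {ι : Type*} (s : Set ι) (X : ι → Set V) :
    D.cutEdges (⋂ i ∈ s, X i) ⊆ ⋃ i ∈ s, D.cutEdges (X i) := by
  intro e he
  simp only [cutEdges, Set.mem_ofPred_eq, Set.mem_iInter₂, not_forall] at he
  simp only [cutEdges, Set.mem_iUnion₂, Set.mem_ofPred_eq]
  rcases he with ⟨ht, i, hi, hh⟩ | ⟨⟨i, hi, ht⟩, hh⟩
  · exact ⟨i, hi, Or.inl ⟨ht i hi, hh⟩⟩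
  · exact ⟨i, hi, Or.inr ⟨ht, hh i hi⟩⟩

lemma cutEdges_biUnion_subset {ι : Type*} (s : Set ι) (X : ι → Set V) :
    D.cutEdges (⋃ i ∈ s, X i) ⊆ ⋃ i ∈ s, D.cutEdges (X i) := by
  rw [← cutEdges_compl, Set.compl_iUnion₂]
  simpa only [cutEdges_compl] using cutEdges_biInter_subset s fun i => (X i)ᶜ

/-- The side is the union over `a ∈ Y ∩ T` of the intersection of finite cuts separating `a`
from each point of `T \ Y`. -/
lemma FinitelySeparable.exists_finite_cutEdges_inter_eq (hsep : D.FinitelySeparable)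
    {T : Set V} (hT : T.Finite) (Y : Set V) :
    ∃ X : Set V, (D.cutEdges X).Finite ∧ X ∩ T = Y ∩ T := by
  have hsep' : ∀ a b : V, ∃ X : Set V, (D.cutEdges X).Finite ∧ (a ≠ b → a ∈ X ∧ b ∉ X) := by
    intro a b
    by_cases hab : a = b
    · exact ⟨∅, by simp [cutEdges], fun h => absurd hab h⟩
    · obtain ⟨X, hX, ha, hb⟩ := hsep a b hab
      exact ⟨X, hX, fun _ => ⟨ha, hb⟩⟩
  choose S hSfin hS using hsep'
  refine ⟨⋃ a ∈ Y ∩ T, ⋂ b ∈ T \ Y, S a b, ?_, ?_⟩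
  · refine ((hT.inter_of_right Y).biUnion fun a _ =>
      (hT.sdiff (t := Y)).biUnion fun b _ => hSfin a b).subset ?_
    refine (cutEdges_biUnion_subset _ _).trans (Set.biUnion_mono le_rfl fun a _ => ?_)
    exact cutEdges_biInter_subset _ _
  · ext x
    simp only [Set.mem_inter_iff, Set.mem_iUnion₂, Set.mem_iInter₂, Set.mem_sdiff,
      exists_prop]
    constructor
    · rintro ⟨⟨a, ⟨haY, -⟩, hx⟩, hxT⟩
      refine ⟨by_contra fun hxY => ?_, hxT⟩
      exact (hS a x (fun h => hxY (h ▸ haY))).2 (hx x ⟨hxT, hxY⟩)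
    · rintro ⟨hxY, hxT⟩
      exact ⟨⟨x, ⟨hxY, hxT⟩, fun b ⟨_, hbY⟩ =>
        (hS x b fun h => hbY (h ▸ hxY)).1⟩, hxT⟩

variable {v w : V} {W : Set E}

lemma Witness.symm (hW : D.Witness v w W) : D.Witness w v W := by
  intro X hX hwX hvX
  obtain ⟨hout, hin⟩ := hW Xᶜ (by rwa [cutEdges_compl]) hvX (not_not.mpr hwX)
  exact ⟨by simpa only [Set.mem_compl_iff, not_not, and_comm] using hin,
    by simpa only [Set.mem_compl_iff, not_not, and_comm] using hout⟩

/-- Only the trace of `Y` on the ends of `W` and on `{v, w}` matters, and that trace is the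
trace of a side of a finite cut. -/
lemma Witness.exists_arc_out (hsep : D.FinitelySeparable) (hfin : W.Finite)
    (hW : D.Witness v w W) {Y : Set V} (hv : v ∈ Y) (hw : w ∉ Y) :
    ∃ e ∈ W, D.tail e ∈ Y ∧ D.head e ∉ Y := by
  set T : Set V := D.tail '' W ∪ D.head '' W ∪ {v, w}
  have hT : T.Finite := ((hfin.image _).union (hfin.image _)).union (by simp)
  obtain ⟨X, hXfin, hXT⟩ := hsep.exists_finite_cutEdges_inter_eq hT Y
  have hmem : ∀ x ∈ T, (x ∈ X ↔ x ∈ Y) := fun x hx => by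
    simpa [hx] using congrArg (x ∈ ·) hXT
  have hvX : v ∈ X := (hmem v (by simp [T])).2 hv
  have hwX : w ∉ X := fun h => hw ((hmem w (by simp [T])).1 h)
  obtain ⟨⟨e, he, ht, hh⟩, -⟩ := hW X hXfin hvX hwX
  exact ⟨e, he, (hmem _ (Or.inl (Or.inl ⟨e, he, rfl⟩))).1 ht,
    fun h => hh ((hmem _ (Or.inl (Or.inr ⟨e, he, rfl⟩))).2 h)⟩

lemma Witness.reachable (hsep : D.FinitelySeparable) (hfin : W.Finite)
    (hW : D.Witness v w W) : D.Reachable W v w := by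
  by_contra hvw
  obtain ⟨e, he, ht, hh⟩ :=
    hW.exists_arc_out hsep hfin (Y := {a | D.Reachable W v a}) Relation.ReflTransGen.refl hvw
  exact hh (Relation.ReflTransGen.tail ht ⟨e, he, rfl, rfl⟩)

lemma Reachable.exists_arc_out {a b : V} (hab : D.Reachable W a b) {X : Set V}
    (ha : a ∈ X) (hb : b ∉ X) : ∃ e ∈ W, D.tail e ∈ X ∧ D.head e ∉ X := by
  induction hab with
  | refl => exact absurd ha hb
  | @tail c b _ hcb ih =>
    by_cases hc : c ∈ X
    · obtain ⟨e, he, rfl, rfl⟩ := hcb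
      exact ⟨e, he, hc, hb⟩
    · exact ih hc

lemma witness_of_reachable (hvw : D.Reachable W v w) (hwv : D.Reachable W w v) :
    D.Witness v w W := by
  intro X _ hvX hwX
  obtain ⟨e, he, ht, hh⟩ := hwv.exists_arc_out (X := Xᶜ) hwX (not_not.mpr hvX)
  exact ⟨hvw.exists_arc_out hvX hwX, e, he, ht, not_not.mp hh⟩

lemma Reachable.restrict_strongComponent {a b : V} (hab : D.Reachable W a b)
    (ha : a ∈ D.strongComponent W v) (hb : b ∈ D.strongComponent W v) :
    D.Reachable {e ∈ W | D.tail e ∈ D.strongComponent W v ∧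
      D.head e ∈ D.strongComponent W v} a b := by
  induction hab with
  | refl => exact Relation.ReflTransGen.refl
  | @tail c b hac hcb ih =>
    have hc : c ∈ D.strongComponent W v :=
      ⟨ha.1.trans hac, Relation.ReflTransGen.head hcb hb.2⟩
    obtain ⟨e, he, rfl, rfl⟩ := hcb
    exact (ih hc).tail ⟨e, ⟨he, hc, hb⟩, rfl, rfl⟩

end MultiDigraph

theorem minimal_witness_strongly_connected_general {V E : Type*}
    (D : MultiDigraph V E)
    (hsep : D.FinitelySeparable)
    (v w : V) (W : Set E)
    (hfin : W.Finite) (hW : D.Witness v w W)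
    (hmin : ∀ W' : Set E, W' ⊆ W → D.Witness v w W' → W' = W) :
    ∀ u y : V, (∃ e ∈ W, D.tail e = u ∨ D.head e = u) →
      (∃ e ∈ W, D.tail e = y ∨ D.head e = y) →
      Relation.ReflTransGen
        (fun a b => ∃ e ∈ W, D.tail e = a ∧ D.head e = b) u y := by
  have hvw := hW.reachable hsep hfin
  have hwv := hW.symm.reachable hsep hfin
  set C := D.strongComponent W v
  have hvC : v ∈ C := ⟨Relation.ReflTransGen.refl, Relation.ReflTransGen.refl⟩
  have hwC : w ∈ C := ⟨hvw, hwv⟩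
  have hWC : {e ∈ W | D.tail e ∈ C ∧ D.head e ∈ C} = W :=
    hmin _ (Set.sep_subset _ _) (MultiDigraph.witness_of_reachable
      (hvw.restrict_strongComponent hvC hwC) (hwv.restrict_strongComponent hwC hvC))
  have hsupp : ∀ x, (∃ e ∈ W, D.tail e = x ∨ D.head e = x) → x ∈ C := by
    rintro x ⟨e, he, rfl | rfl⟩ <;> rw [← hWC] at he
    exacts [he.2.1, he.2.2]
  intro u y hu hy
  exact (hsupp u hu).2.trans (hsupp y hy).1

/-- Let `D` be a weakly connected, finitely separable digraph and let
`v ≠ w` with `v ∼ w`. If `W` is a finite inclusion-minimal witness for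
`v ∼ w`, then the subdigraph induced by the edge set `W` is strongly
connected: any two vertices incident with an edge of `W` are joined by a
directed path using only edges of `W`. -/
theorem minimal_witness_strongly_connected {V E : Type*}
    (D : MultiDigraph V E) (hD : D.WeaklyConnected)
    (hsep : D.FinitelySeparable)
    (v w : V) (hne : v ≠ w) (hvw : D.Sim v w) (W : Set E)
    (hfin : W.Finite) (hW : D.Witness v w W)
    (hmin : ∀ W' : Set E, W' ⊆ W → D.Witness v w W' → W' = W) :
    ∀ u y : V, (∃ e ∈ W, D.tail e = u ∨ D.head e = u) →
      (∃ e ∈ W, D.tail e = y ∨ D.head e = y) →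
      Relation.ReflTransGen
        (fun a b => ∃ e ∈ W, D.tail e = a ∧ D.head e = b) u y :=
  minimal_witness_strongly_connected_general D hsep v w W hfin hW hmin
end

section
/- Let D be a weakly connected digraph whose underlying undirected graph is rayless. Then the quotient digraph D/∼, obtained by identifying the vertices within each ∼-equivalence class and deleting the resulting loops, is also rayless. -/
namespace MultiDigraph

variable {V : Type*} {E : Type*} (D : MultiDigraph V E)

/-- `∼` (no finite dicut separates the two vertices) as a setoid on `V`. -/
def simSetoid : Setoid V where
  r := D.Sim
  iseqv := ⟨fun _ _ _ _ _ => Iff.rfl,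
    fun h X B hB hfin => (h X B hB hfin).symm,
    fun h₁ h₂ X B hB hfin => (h₁ X B hB hfin).trans (h₂ X B hB hfin)⟩

/-- The quotient digraph `D/∼`: its vertices are the `∼`-equivalence classes,
and its edges are the edges of `D` whose endpoints are not `∼`-equivalent
(i.e. all loops arising from the identification are deleted). -/
def quotientBySim :
    MultiDigraph (Quotient D.simSetoid) {e : E // ¬ D.Sim (D.tail e) (D.head e)} where
  tail e := Quotient.mk D.simSetoid (D.tail e.1)
  head e := Quotient.mk D.simSetoid (D.head e.1)

end MultiDigraph

/-!
If `v ∼ w` and `S` is a finite set of vertices not equivalent to `v`, then some walk from `v`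
to `w` avoids `S`: otherwise the finite dicuts separating `v` from the vertices of `S`, together
with the vertices reachable from `v` in `D - S`, would assemble into a finite dicut separating
`v` from `w`. So a ray `[x₀] [x₁] …` of `D/∼` lifts to an infinite walk in `D` which crosses each
class `[xₙ]` avoiding the finitely many earlier visited vertices outside `[xₙ]`. That walk visits
every vertex only finitely often, hence contains a ray of `D`.
-/

open Function

section Chains

variable {α : Type*} {r : α → α → Prop}

theorem exists_injective_chain_of_finite_fibers {g : ℕ → α} (hg : ∀ k, r (g k) (g (k + 1)))
    (hfin : ∀ x, {k | g k = x}.Finite) :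
    ∃ f : ℕ → α, Injective f ∧ ∀ n, r (f n) (f (n + 1)) := by
  -- Jump to the last visit of the current vertex and step on: no vertex is visited twice.
  set last : ℕ → ℕ := fun k => sSup {j | g j = g k}
  have g_last (k : ℕ) : g (last k) = g k :=
    Nat.sSup_mem (s := {j | g j = g k}) ⟨k, rfl⟩ (hfin _).bddAbove
  have le_last {j k : ℕ} (h : g j = g k) : j ≤ last k := le_csSup (hfin _).bddAbove h
  set s : ℕ → ℕ := fun n => Nat.rec 0 (fun _ m => last m + 1) n
  have s_succ (n : ℕ) : s (n + 1) = last (s n) + 1 := rfl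
  have s_mono : StrictMono s :=
    strictMono_nat_of_lt_succ fun n => (s_succ n).symm ▸ Nat.lt_succ_of_le (le_last rfl)
  refine ⟨g ∘ s, Injective.of_lt_imp_ne fun a b hab hg_eq => ?_, fun n => ?_⟩
  · have : last (s a) + 1 ≤ s b := s_succ a ▸ s_mono.monotone hab
    exact (le_last hg_eq.symm).not_gt this
  · simpa only [comp_apply, s_succ, g_last] using hg (last (s n))

theorem exists_chain_finite_fibers_of_segments (P : ℕ → List α) (hne : ∀ n, P n ≠ [])
    (hchain : ∀ n, (P n).IsChain r)
    (hlink : ∀ n, ∀ x ∈ (P n).getLast?, ∀ y ∈ (P (n + 1)).head?, r x y)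
    (hfin : ∀ x, {n | x ∈ P n}.Finite) :
    ∃ g : ℕ → α, (∀ k, r (g k) (g (k + 1))) ∧ ∀ x, {k | g k = x}.Finite := by
  set H : ℕ → List α := fun m => ((List.range m).map P).flatten
  have H_succ (m : ℕ) : H (m + 1) = H m ++ P m := by simp [H, List.range_succ]
  have H_prefix {m m' : ℕ} (h : m ≤ m') : H m <+: H m' := by
    induction m', h using Nat.le_induction with
    | base => exact List.prefix_refl _
    | succ m' _ ih => exact (H_succ m').symm ▸ ih.trans (List.prefix_append _ _)
  have le_length (m : ℕ) : m ≤ (H m).length := by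
    induction m with
    | zero => simp [H]
    | succ m ih =>
      rw [H_succ, List.length_append]
      exact Nat.add_le_add ih (List.length_pos_iff.2 (hne m))
  have H_chain (m : ℕ) : (H m).IsChain r := by
    refine (List.isChain_flatten (by simp [hne])).2 ⟨by simpa using fun n _ => hchain n, ?_⟩
    exact List.isChain_map_of_isChain P (fun _ _ h => h ▸ hlink _)
      ((List.isChain_range _ _).2 fun _ _ => rfl)
  set g : ℕ → α := fun k => (H (k + 1))[k]'(le_length (k + 1))
  have g_eq {m k : ℕ} (hk : k < (H m).length) : g k = (H m)[k] := by
    rcases le_total m (k + 1) with h | h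
    · exact ((H_prefix h).getElem hk).symm
    · exact (H_prefix h).getElem _
  have mem_segment (m k : ℕ) (hk : k < (H m).length) :
      ∃ n, k < (H (n + 1)).length ∧ (H m)[k] ∈ P n := by
    induction m with
    | zero => simp [H] at hk
    | succ m ih =>
      simp only [H_succ m, List.getElem_append] at hk ⊢
      split_ifs with h
      · exact ih h
      · exact ⟨m, by simpa [H_succ] using hk, List.getElem_mem _⟩
  refine ⟨g, fun k => ?_, fun x => ?_⟩
  · have hk : k + 1 < (H (k + 2)).length := le_length (k + 2)
    rw [g_eq (m := k + 2) (by omega), g_eq hk]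
    exact List.isChain_iff_getElem.1 (H_chain _) k hk
  · obtain ⟨N, hN⟩ := (hfin x).bddAbove
    refine (Set.finite_Iio (H (N + 1)).length).subset fun k (hk : g k = x) => ?_
    obtain ⟨n, hkn, hn⟩ := mem_segment _ k (le_length (k + 1))
    have : n ≤ N := hN (show x ∈ P n from hk ▸ hn)
    exact hkn.trans_le (H_prefix (by omega)).length_le

end Chains

namespace MultiDigraph

open Relation

variable {V E : Type*} (D : MultiDigraph V E)

lemma adj_symm {a b : V} : D.Adj a b → D.Adj b a := fun ⟨e, he⟩ => ⟨e, he.symm⟩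

lemma adj_tail_head (e : E) : D.Adj (D.tail e) (D.head e) := ⟨e, Or.inl ⟨rfl, rfl⟩⟩

def inCut (X : Set V) : Set E := {e | D.tail e ∉ X ∧ D.head e ∈ X}

def IsForwardClosed (X : Set V) : Prop := ∀ e, D.tail e ∈ X → D.head e ∈ X

lemma sim_iff {v w : V} :
    D.Sim v w ↔ ∀ X, D.IsForwardClosed X → (D.inCut X).Finite → (v ∈ X ↔ w ∈ X) :=
  ⟨fun h X hX => h X _ ⟨hX, rfl⟩, by rintro h X B ⟨hX, rfl⟩; exact h X hX⟩

section Shore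

variable {S : Set V} {X : S → Set V} {v : V} {K : Set V}

/-- With `X s` an in-shore separating `v` from `s ∈ S` and `K` the vertices reachable from `v`
outside `S`, this is an in-shore containing `v` whose in-cut lies in those of the `X s`. -/
def shore (X : S → Set V) (v : V) (K : Set V) : Set V :=
  {z | z ∈ K ∧ ∀ s, v ∈ X s → z ∈ X s} ∪ {z | ∃ s, v ∉ X s ∧ z ∈ X s}

lemma isForwardClosed_shore (hX : ∀ s, D.IsForwardClosed (X s))
    (hsep : ∀ s : S, ¬((s : V) ∈ X s ↔ v ∈ X s)) (hK : ∀ a b, D.Adj a b → b ∉ S → a ∈ K → b ∈ K) :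
    D.IsForwardClosed (shore X v K) := by
  rintro e (⟨htK, htX⟩ | ⟨s, hvs, hts⟩)
  · have hhX (s) (hvs : v ∈ X s) : D.head e ∈ X s := hX s e (htX s hvs)
    by_cases hhS : D.head e ∈ S
    · refine Or.inr ⟨⟨_, hhS⟩, fun hv => ?_, ?_⟩
      · exact hsep _ (iff_of_true (hhX _ hv) hv)
      · by_contra hh
        exact hsep _ (iff_of_false hh fun hv => hh (hhX _ hv))
    · exact Or.inl ⟨hK _ _ (D.adj_tail_head e) hhS htK, hhX⟩
  · exact Or.inr ⟨s, hvs, hX s e hts⟩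

lemma inCut_shore_subset (hsep : ∀ s : S, ¬((s : V) ∈ X s ↔ v ∈ X s))
    (hK : ∀ a b, D.Adj a b → b ∉ S → a ∈ K → b ∈ K) :
    D.inCut (shore X v K) ⊆ ⋃ s, D.inCut (X s) := by
  rintro e ⟨ht, hh | ⟨s, hvs, hhs⟩⟩
  · obtain ⟨hhK, hhX⟩ := hh
    suffices ∃ s, v ∈ X s ∧ D.tail e ∉ X s from
      let ⟨s, hvs, hts⟩ := this; Set.mem_iUnion.2 ⟨s, hts, hhX s hvs⟩
    by_cases htS : D.tail e ∈ S
    · refine ⟨⟨_, htS⟩, ?_, fun hts => ?_⟩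
      · by_contra hvs
        exact ht (Or.inr ⟨⟨_, htS⟩, hvs, by_contra fun hts => hsep _ (iff_of_false hts hvs)⟩)
      · exact ht (Or.inr ⟨⟨_, htS⟩, fun hvs => hsep _ (iff_of_true hts hvs), hts⟩)
    · by_contra! hA
      exact ht (Or.inl ⟨hK _ _ (D.adj_symm (D.adj_tail_head e)) htS hhK, hA⟩)
  · exact Set.mem_iUnion.2 ⟨s, fun hts => ht (Or.inr ⟨s, hvs, hts⟩), hhs⟩

end Shore

lemma reflTransGen_of_sim {v w : V} (hvw : D.Sim v w) {S : Set V} (hS : S.Finite)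
    (hSv : ∀ s ∈ S, ¬D.Sim s v) : ReflTransGen (fun a b => D.Adj a b ∧ b ∉ S) v w := by
  have hsep (s : S) :
      ∃ X, D.IsForwardClosed X ∧ (D.inCut X).Finite ∧ ¬((s : V) ∈ X ↔ v ∈ X) := by
    simpa [sim_iff] using hSv s s.2
  choose X hX hXfin hsep using hsep
  set K := {z | ReflTransGen (fun a b => D.Adj a b ∧ b ∉ S) v z}
  have hK (a b : V) (hab : D.Adj a b) (hb : b ∉ S) (ha : a ∈ K) : b ∈ K := ha.tail ⟨hab, hb⟩
  have : Finite S := hS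
  have hw := (D.sim_iff.1 hvw (shore X v K) (D.isForwardClosed_shore hX hsep hK)
    ((Set.finite_iUnion hXfin).subset (D.inCut_shore_subset hsep hK))).1
    (Or.inl ⟨ReflTransGen.refl, fun _ h => h⟩)
  rcases hw with ⟨hwK, -⟩ | ⟨s, hvs, hws⟩
  · exact hwK
  · exact absurd ((D.sim_iff.1 hvw (X s) (hX s) (hXfin s)).2 hws) hvs

lemma exists_isChain_of_sim {v w : V} (hvw : D.Sim v w) (L : List V) :
    ∃ l, (v :: l).IsChain D.Adj ∧ (v :: l).getLast (List.cons_ne_nil _ _) = w ∧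
      ∀ x ∈ l, x ∈ L → D.Sim x v := by
  set S := {x | x ∈ L ∧ ¬D.Sim x v}
  have hvS : v ∉ S := fun h => h.2 (D.simSetoid.iseqv.refl v)
  obtain ⟨l, hl, hlast⟩ := List.exists_isChain_cons_of_relationReflTransGen
    (D.reflTransGen_of_sim hvw (S := S) (L.finite_toSet.subset fun _ h => h.1) fun _ h => h.2)
  refine ⟨l, hl.imp fun _ _ h => h.1, hlast, fun x hx hxL => ?_⟩
  by_contra hxv
  exact hl.cons_induction (· ∉ S) _ (fun _ _ h _ => h.2) hvS x hx ⟨hxL, hxv⟩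

lemma exists_adj_of_quotientBySim_adj {a b : Quotient D.simSetoid}
    (h : D.quotientBySim.Adj a b) :
    ∃ x y, D.Adj x y ∧ ⟦x⟧ = a ∧ ⟦y⟧ = b := by
  obtain ⟨e, ⟨ht, hh⟩ | ⟨ht, hh⟩⟩ := h
  · exact ⟨_, _, D.adj_tail_head e.1, ht, hh⟩
  · exact ⟨_, _, D.adj_symm (D.adj_tail_head e.1), hh, ht⟩

lemma exists_segments_of_quotientBySim_ray {f : ℕ → Quotient D.simSetoid}
    (hf : Injective f) (hadj : ∀ n, D.quotientBySim.Adj (f n) (f (n + 1))) :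
    ∃ P : ℕ → List V, (∀ n, P n ≠ []) ∧ (∀ n, (P n).IsChain D.Adj) ∧
      (∀ n, ∀ x ∈ (P n).getLast?, ∀ y ∈ (P (n + 1)).head?, D.Adj x y) ∧
      ∀ x, {n | x ∈ P n}.Finite := by
  choose a b hab ha hb using fun n => D.exists_adj_of_quotientBySim_adj (hadj n)
  have hba (n : ℕ) : D.Sim (b n) (a (n + 1)) := Quotient.exact ((hb n).trans (ha (n + 1)).symm)
  choose c hc hlast hcL using fun n => D.exists_isChain_of_sim (hba n)
  -- `H n` lists the vertices of the first `n` segments; segment `n` meets them only inside the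
  -- class `f (n + 1)`.
  set H : ℕ → List V := fun n => Nat.rec [] (fun n h => h ++ (b n :: c n h)) n
  set P : ℕ → List V := fun n => b n :: c n (H n)
  have H_succ (n : ℕ) : H (n + 1) = H n ++ P n := rfl
  have mem_H {x : V} {k n : ℕ} (hkn : k < n) (hx : x ∈ P k) : x ∈ H n := by
    induction n, hkn using Nat.le_induction with
    | base => simp [H_succ, hx]
    | succ n _ ih => simp [H_succ, ih]
  have mem_P {x : V} {n : ℕ} (hxH : x ∈ H n) (hxP : x ∈ P n) : ⟦x⟧ = f (n + 1) := by
    rcases List.mem_cons.1 hxP with rfl | hx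
    · exact hb n
    · exact (Quotient.sound (hcL n (H n) x hx hxH)).trans (hb n)
  refine ⟨P, fun n => List.cons_ne_nil _ _, fun n => hc n (H n), fun n x hx y hy => ?_,
    fun x => ?_⟩
  · rw [List.getLast?_eq_some_getLast (List.cons_ne_nil _ _), hlast, Option.mem_some_iff] at hx
    obtain rfl : y = b (n + 1) := by simpa [P] using hy.symm
    exact hx ▸ hab (n + 1)
  · by_cases hx : ∃ k, x ∈ P k
    · obtain ⟨k, hk⟩ := hx
      have hsub : {n | f (n + 1) = ⟦x⟧}.Subsingleton := fun m hm n hn =>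
        Nat.succ_injective (hf (hm.trans hn.symm))
      refine ((Set.finite_Iic k).union hsub.finite).subset fun n hn => ?_
      by_cases hkn : k < n
      · exact Or.inr (mem_P (mem_H hkn hk) hn).symm
      · exact Or.inl (not_lt.1 hkn)
    · simp [not_exists.1 hx]

end MultiDigraph

theorem quotientBySim_rayless_general {V E : Type*}
    (D : MultiDigraph V E) (h : D.Rayless) :
    D.quotientBySim.Rayless := by
  rintro ⟨f, hf, hadj⟩
  obtain ⟨P, hne, hchain, hlink, hfin⟩ := D.exists_segments_of_quotientBySim_ray hf hadj
  obtain ⟨g, hg, hgfin⟩ := exists_chain_finite_fibers_of_segments P hne hchain hlink hfin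
  exact h (exists_injective_chain_of_finite_fibers hg hgfin)

/-- If a weakly connected digraph `D` is rayless, then so is the quotient
digraph `D/∼`. -/
theorem quotientBySim_rayless {V E : Type*}
    (D : MultiDigraph V E) (hD : D.WeaklyConnected) (h : D.Rayless) :
    D.quotientBySim.Rayless :=
  quotientBySim_rayless_general D h
end

section
/- Let D be a weakly connected digraph and let 𝔅 be a class of dibonds of D. Then a pair (F, ℬ) is a (nested) 𝔅-optimal pair for D if and only if it is a (nested) 𝔅-optimal pair for the quotient digraph D/≡_𝔅, obtained from D by identifying the vertices in each ≡_𝔅-equivalence class and deleting the resulting loops. -/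
namespace MultiDigraph

variable {V : Type*} {E : Type*} (D : MultiDigraph V E)

/-- `v ≡_𝔅 w`: no cut in `𝔅` separates `v` and `w`. -/
def SepEquiv (𝔅 : Set (Set E)) (v w : V) : Prop :=
  ∀ B ∈ 𝔅, ∀ X : Set V, D.DicutWith X B → (v ∈ X ↔ w ∈ X)

/-- `≡_𝔅` as a setoid on `V`. -/
def sepSetoid (𝔅 : Set (Set E)) : Setoid V where
  r := D.SepEquiv 𝔅
  iseqv := ⟨fun _ _ _ _ _ => Iff.rfl,
    fun h B hB X hX => (h B hB X hX).symm,
    fun h₁ h₂ B hB X hX => (h₁ B hB X hX).trans (h₂ B hB X hX)⟩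

/-- The edges of the quotient `D/≡_𝔅`: the edges of `D` whose endpoints are
not `≡_𝔅`-equivalent (all loops arising from the identification are
deleted). -/
def SepEdge (𝔅 : Set (Set E)) : Type _ :=
  {e : E // ¬ D.SepEquiv 𝔅 (D.tail e) (D.head e)}

/-- The quotient digraph `D/≡_𝔅`. -/
def quotientBySep (𝔅 : Set (Set E)) :
    MultiDigraph (Quotient (D.sepSetoid 𝔅)) (D.SepEdge 𝔅) where
  tail e := Quotient.mk (D.sepSetoid 𝔅) (D.tail e.1)
  head e := Quotient.mk (D.sepSetoid 𝔅) (D.head e.1)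

/-- An edge set of `D` regarded as an edge set of `D/≡_𝔅`. -/
def toSepEdges (𝔅 : Set (Set E)) (B : Set E) : Set (D.SepEdge 𝔅) :=
  {e : D.SepEdge 𝔅 | e.1 ∈ B}

end MultiDigraph

/-- A `𝔅`-optimal pair: `F` is a `𝔅`-dijoin (it meets every dibond in `𝔅`),
`ℬ ⊆ 𝔅` is a set of pairwise disjoint dibonds, `F ⊆ ⋃ ℬ`, and `|F ∩ B| = 1`
for every `B ∈ ℬ`. -/
def BOptimalPair {E : Type*} (𝔅 : Set (Set E)) (F : Set E) (ℬ : Set (Set E)) : Prop :=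
  (∀ B ∈ 𝔅, (F ∩ B).Nonempty) ∧ ℬ ⊆ 𝔅 ∧ ℬ.Pairwise Disjoint ∧
    F ⊆ ⋃₀ ℬ ∧ ∀ B ∈ ℬ, (F ∩ B).ncard = 1

/-!
Every edge of a dicut in `𝔅` joins two different `≡_𝔅`-classes, so the members of `𝔅` already
live in the edge set of `D/≡_𝔅`; since that edge set embeds injectively into `E(D)`, each
clause of being a `𝔅`-optimal pair (meeting, containment, disjointness, covering, counting)
is unchanged when read in the quotient. For nestedness, the sides of a dicut in `𝔅` are unions
of `≡_𝔅`-classes, hence exactly the preimages of the sides of the corresponding dicut of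
`D/≡_𝔅`; preimages under the surjective quotient map preserve and reflect inclusions and
commute with complements.
-/

open Set Function

theorem bOptimalPair_image_iff {α β : Type*} {f : α → β} (hf : Injective f)
    {𝔅 : Set (Set β)} (h𝔅 : ∀ B ∈ 𝔅, B ⊆ range f) (F : Set α) (ℬ : Set (Set α)) :
    BOptimalPair 𝔅 (f '' F) (image f '' ℬ) ↔ BOptimalPair (preimage f '' 𝔅) F ℬ := by
  have dijoin : (∀ B ∈ 𝔅, (f '' F ∩ B).Nonempty) ↔ ∀ A ∈ preimage f '' 𝔅, (F ∩ A).Nonempty := by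
    simp only [forall_mem_image, ← image_inter_preimage, image_nonempty]
  have subset : image f '' ℬ ⊆ 𝔅 ↔ ℬ ⊆ preimage f '' 𝔅 := by
    refine ⟨fun h A hA => ⟨f '' A, h (mem_image_of_mem _ hA), preimage_image_eq A hf⟩, ?_⟩
    rintro h _ ⟨A, hA, rfl⟩
    obtain ⟨B, hB, rfl⟩ := h hA
    rwa [image_preimage_eq_of_subset (h𝔅 B hB)]
  have disjoint : (image f '' ℬ).Pairwise Disjoint ↔ ℬ.Pairwise Disjoint := by
    rw [(image_injective.mpr hf).injOn.pairwise_image]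
    simp only [Set.Pairwise, onFun, disjoint_image_iff hf]
  have cover : f '' F ⊆ ⋃₀ (image f '' ℬ) ↔ F ⊆ ⋃₀ ℬ := by
    rw [← image_sUnion, image_subset_image_iff hf]
  have single : (∀ B ∈ image f '' ℬ, (f '' F ∩ B).ncard = 1) ↔ ∀ A ∈ ℬ, (F ∩ A).ncard = 1 := by
    simp only [forall_mem_image, ← image_inter hf, ncard_image_of_injective _ hf]
  exact and_congr dijoin (and_congr subset (and_congr disjoint (and_congr cover single)))

theorem sidesComparable_preimage_iff {α β : Type*} {f : α → β} (hf : Surjective f)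
    {X₁ X₂ : Set β} :
    (f ⁻¹' X₁ ⊆ f ⁻¹' X₂ ∨ f ⁻¹' X₂ ⊆ f ⁻¹' X₁ ∨ f ⁻¹' X₁ ⊆ (f ⁻¹' X₂)ᶜ ∨ (f ⁻¹' X₂)ᶜ ⊆ f ⁻¹' X₁) ↔
      (X₁ ⊆ X₂ ∨ X₂ ⊆ X₁ ∨ X₁ ⊆ X₂ᶜ ∨ X₂ᶜ ⊆ X₁) := by
  simp only [← preimage_compl, hf.preimage_subset_preimage_iff]

namespace MultiDigraph

variable {V E : Type*} (D : MultiDigraph V E) {𝔅 : Set (Set E)}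

theorem toSepEdges_eq_preimage : D.toSepEdges 𝔅 = preimage Subtype.val := rfl

theorem not_sepEquiv_of_mem {B : Set E} (hB : B ∈ 𝔅) {X : Set V} (hX : D.DicutWith X B)
    {e : E} (he : e ∈ B) : ¬ D.SepEquiv 𝔅 (D.tail e) (D.head e) := by
  rw [hX.2] at he
  exact fun h => he.1 ((h B hB X hX).mpr he.2)

theorem mk_tail_eq_mk_head {e : E} (he : D.SepEquiv 𝔅 (D.tail e) (D.head e)) :
    Quotient.mk (D.sepSetoid 𝔅) (D.tail e) = Quotient.mk _ (D.head e) :=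
  Quotient.sound he

theorem subset_range_val_of_mem (h𝔅 : ∀ B ∈ 𝔅, D.IsDicut B) {B : Set E} (hB : B ∈ 𝔅) :
    B ⊆ range (Subtype.val : D.SepEdge 𝔅 → E) := fun e he =>
  have ⟨_, hX⟩ := h𝔅 B hB
  ⟨⟨e, D.not_sepEquiv_of_mem hB hX he⟩, rfl⟩

theorem bOptimalPair_val_image_iff (h𝔅 : ∀ B ∈ 𝔅, D.IsDicut B) (F : Set (D.SepEdge 𝔅))
    (ℬ : Set (Set (D.SepEdge 𝔅))) :
    BOptimalPair 𝔅 (Subtype.val '' F) (image Subtype.val '' ℬ) ↔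
      BOptimalPair (D.toSepEdges 𝔅 '' 𝔅) F ℬ := by
  rw [toSepEdges_eq_preimage]
  exact bOptimalPair_image_iff Subtype.val_injective
    (fun _ hB => D.subset_range_val_of_mem h𝔅 hB) F ℬ

theorem preimage_image_mk_of_dicutWith {B : Set E} (hB : B ∈ 𝔅) {X : Set V}
    (hX : D.DicutWith X B) : Quotient.mk (D.sepSetoid 𝔅) ⁻¹' (Quotient.mk _ '' X) = X := by
  ext v
  refine ⟨?_, fun hv => ⟨v, hv, rfl⟩⟩
  rintro ⟨w, hw, hwv⟩
  exact (Quotient.exact hwv B hB X hX).mp hw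

theorem dicutWith_preimage_mk_iff (X : Set (Quotient (D.sepSetoid 𝔅))) (A : Set (D.SepEdge 𝔅)) :
    D.DicutWith (Quotient.mk _ ⁻¹' X) (Subtype.val '' A) ↔ (D.quotientBySep 𝔅).DicutWith X A := by
  let crossing : Set E := {e | Quotient.mk _ (D.tail e) ∉ X ∧ Quotient.mk _ (D.head e) ∈ X}
  have closed : (∀ e : E, Quotient.mk _ (D.tail e) ∈ X → Quotient.mk _ (D.head e) ∈ X) ↔
      ∀ e : D.SepEdge 𝔅, Quotient.mk _ (D.tail e.1) ∈ X → Quotient.mk _ (D.head e.1) ∈ X := by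
    refine ⟨fun h e => h e.1, fun h e => ?_⟩
    by_cases he : D.SepEquiv 𝔅 (D.tail e) (D.head e)
    · exact fun ht => D.mk_tail_eq_mk_head he ▸ ht
    · exact h ⟨e, he⟩
  have crossing_subset : crossing ⊆ range (Subtype.val : D.SepEdge 𝔅 → E) := fun e he =>
    ⟨⟨e, fun h => he.1 (D.mk_tail_eq_mk_head h ▸ he.2)⟩, rfl⟩
  have edges : Subtype.val '' A = crossing ↔ A = Subtype.val ⁻¹' crossing :=
    ⟨fun h => h ▸ (preimage_image_eq A Subtype.val_injective).symm,
      fun h => h ▸ image_preimage_eq_of_subset crossing_subset⟩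
  exact and_congr closed edges

theorem nestedDicuts_val_image_iff {A₁ A₂ : Set (D.SepEdge 𝔅)} (h₁ : Subtype.val '' A₁ ∈ 𝔅)
    (h₂ : Subtype.val '' A₂ ∈ 𝔅) :
    D.NestedDicuts (Subtype.val '' A₁) (Subtype.val '' A₂) ↔
      (D.quotientBySep 𝔅).NestedDicuts A₁ A₂ := by
  constructor
  · rintro ⟨X₁, X₂, hX₁, hX₂, hcomp⟩
    have e₁ := D.preimage_image_mk_of_dicutWith h₁ hX₁
    have e₂ := D.preimage_image_mk_of_dicutWith h₂ hX₂
    rw [← e₁, ← e₂] at hcomp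
    rw [← e₁] at hX₁
    rw [← e₂] at hX₂
    exact ⟨_, _, (D.dicutWith_preimage_mk_iff _ _).mp hX₁, (D.dicutWith_preimage_mk_iff _ _).mp hX₂,
      (sidesComparable_preimage_iff Quotient.mk_surjective).mp hcomp⟩
  · rintro ⟨X₁, X₂, hX₁, hX₂, hcomp⟩
    exact ⟨_, _, (D.dicutWith_preimage_mk_iff _ _).mpr hX₁, (D.dicutWith_preimage_mk_iff _ _).mpr hX₂,
      (sidesComparable_preimage_iff Quotient.mk_surjective).mpr hcomp⟩

theorem pairwise_nestedDicuts_val_image_iff {ℬ : Set (Set (D.SepEdge 𝔅))}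
    (hℬ : image Subtype.val '' ℬ ⊆ 𝔅) :
    (image Subtype.val '' ℬ).Pairwise D.NestedDicuts ↔
      ℬ.Pairwise (D.quotientBySep 𝔅).NestedDicuts := by
  refine ((image_injective.mpr Subtype.val_injective).injOn.pairwise_image).trans ?_
  exact forall₂_congr fun A₁ h₁ => forall₂_congr fun A₂ h₂ => imp_congr_right fun _ =>
    D.nestedDicuts_val_image_iff (hℬ (mem_image_of_mem _ h₁)) (hℬ (mem_image_of_mem _ h₂))

end MultiDigraph

theorem bOptimalPair_iff_quotient_general {V E : Type*}
    (D : MultiDigraph V E)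
    (𝔅 : Set (Set E)) (h𝔅 : ∀ B ∈ 𝔅, D.IsDibond B)
    (F : Set (D.SepEdge 𝔅)) (ℬ : Set (Set (D.SepEdge 𝔅))) :
    (BOptimalPair 𝔅 (Subtype.val '' F) ((Set.image Subtype.val) '' ℬ) ↔
      BOptimalPair (D.toSepEdges 𝔅 '' 𝔅) F ℬ) ∧
    ((BOptimalPair 𝔅 (Subtype.val '' F) ((Set.image Subtype.val) '' ℬ) ∧
        ((Set.image Subtype.val) '' ℬ).Pairwise D.NestedDicuts) ↔
      (BOptimalPair (D.toSepEdges 𝔅 '' 𝔅) F ℬ ∧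
        ℬ.Pairwise (D.quotientBySep 𝔅).NestedDicuts)) := by
  have hopt := D.bOptimalPair_val_image_iff (fun B hB => (h𝔅 B hB).1) F ℬ
  refine ⟨hopt, ?_⟩
  rw [← hopt]
  exact and_congr_right fun h => D.pairwise_nestedDicuts_val_image_iff h.2.1

/-- Let `𝔅` be a class of dibonds of a weakly connected digraph `D`. A pair
`(F, ℬ)` (of quotient edge sets, equivalently edge sets of `D` avoiding the
contracted loops) is a (nested) `𝔅`-optimal pair for `D` if and only if it is
a (nested) `𝔅`-optimal pair for the quotient digraph `D/≡_𝔅`. -/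
theorem bOptimalPair_iff_quotient {V E : Type*}
    (D : MultiDigraph V E) (hD : D.WeaklyConnected)
    (𝔅 : Set (Set E)) (h𝔅 : ∀ B ∈ 𝔅, D.IsDibond B)
    (F : Set (D.SepEdge 𝔅)) (ℬ : Set (Set (D.SepEdge 𝔅))) :
    (BOptimalPair 𝔅 (Subtype.val '' F) ((Set.image Subtype.val) '' ℬ) ↔
      BOptimalPair (D.toSepEdges 𝔅 '' 𝔅) F ℬ) ∧
    ((BOptimalPair 𝔅 (Subtype.val '' F) ((Set.image Subtype.val) '' ℬ) ∧
        ((Set.image Subtype.val) '' ℬ).Pairwise D.NestedDicuts) ↔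
      (BOptimalPair (D.toSepEdges 𝔅 '' 𝔅) F ℬ ∧
        ℬ.Pairwise (D.quotientBySep 𝔅).NestedDicuts)) :=
  bOptimalPair_iff_quotient_general D 𝔅 h𝔅 F ℬ
end

section
/- Let H = (V, ℰ) be a hypergraph of finite character that is locally finite, and suppose that for every finite set F ⊆ ℰ there exists a finite set F' ⊆ ℰ with F ⊆ F' such that the hypergraph (V, F') has the König property. Then H has the König property. -/
/-- A hypergraph on vertex set `V` with hyperedge set `ℰ` has the König
property if there are a matching `M ⊆ ℰ` (a set of pairwise disjoint
hyperedges) and a cover `A` (a vertex set meeting every hyperedge of `ℰ`)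
such that `A ⊆ ⋃ M` and `|m ∩ A| = 1` for every `m ∈ M`. -/
def KonigProperty {V : Type*} (ℰ : Set (Set V)) : Prop :=
  ∃ (M : Set (Set V)) (A : Set V),
    M ⊆ ℰ ∧ M.Pairwise Disjoint ∧
    (∀ e ∈ ℰ, (e ∩ A).Nonempty) ∧
    A ⊆ ⋃₀ M ∧
    ∀ m ∈ M, (m ∩ A).ncard = 1

/-- Let `H = (V, ℰ)` be a locally finite hypergraph of finite character, and
suppose that every finite `F ⊆ ℰ` extends to a finite `F' ⊆ ℰ` such that
`(V, F')` has the König property. Then `H` has the König property. -/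
theorem konigProperty_of_locallyFinite_finiteCharacter {V : Type*}
    (ℰ : Set (Set V))
    (hfc : ∀ e ∈ ℰ, e.Finite)
    (hlf : ∀ v : V, {e ∈ ℰ | v ∈ e}.Finite)
    (h : ∀ F : Set (Set V), F ⊆ ℰ → F.Finite →
      ∃ F' : Set (Set V), F' ⊆ ℰ ∧ F'.Finite ∧ F ⊆ F' ∧ KonigProperty F') :
    KonigProperty ℰ := by
  classical
  have key : ∀ F : Finset {e // e ∈ ℰ}, ∃ (M : Set (Set V)) (A : Set V),
      M ⊆ ℰ ∧ M.Pairwise Disjoint ∧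
      (∀ e : {e // e ∈ ℰ}, e ∈ F → ((e : Set V) ∩ A).Nonempty) ∧
      A ⊆ ⋃₀ M ∧ ∀ m ∈ M, (m ∩ A).ncard = 1 := by
    intro F
    obtain ⟨F', hsub, hfin, hFF', hK⟩ :=
      h (Subtype.val '' (F : Set {e // e ∈ ℰ}))
        (by rintro e ⟨⟨e, he⟩, -, rfl⟩; exact he)
        (F.finite_toSet.image _)
    obtain ⟨M, A, hMF', hdisj, hcov, hAM, hone⟩ := hK
    exact ⟨M, A, hMF'.trans hsub, hdisj,
      fun e heF => hcov e (hFF' ⟨e, by simpa using heF, rfl⟩), hAM, hone⟩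
  choose Mf Af hMsub hdisj hcov hAM hone using key
  set U : Ultrafilter (Finset {e // e ∈ ℰ}) :=
    Ultrafilter.of Filter.atTop with hUdef
  have hU : (↑U : Filter (Finset {e // e ∈ ℰ})) ≤ Filter.atTop :=
    Ultrafilter.of_le _
  have hmemU : ∀ x : {e // e ∈ ℰ}, {F | x ∈ F} ∈ U := by
    intro x
    have h1 : {F : Finset {e // e ∈ ℰ} | {x} ≤ F} ∈ U :=
      hU (Filter.mem_atTop ({x} : Finset _))
    exact Filter.mem_of_superset h1 (fun F hF => by
      simpa [Finset.singleton_subset_iff] using hF)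
  refine ⟨{m | m ∈ ℰ ∧ {F | m ∈ Mf F} ∈ U}, {v | {F | v ∈ Af F} ∈ U},
    fun m hm => hm.1, ?_, ?_, ?_, ?_⟩
  · -- pairwise disjoint
    rintro m ⟨hmE, hmU⟩ m' ⟨hmE', hmU'⟩ hne
    obtain ⟨F, hF1, hF2⟩ := Ultrafilter.nonempty_of_mem (U.inter_mem hmU hmU')
    exact hdisj F hF1 hF2 hne
  · -- cover
    intro e he
    have hefin := hfc e he
    have hsub : {F | (⟨e, he⟩ : {e // e ∈ ℰ}) ∈ F} ⊆ ⋃ v ∈ e, {F | v ∈ Af F} := by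
      intro F hF
      obtain ⟨v, hv, hvA⟩ := hcov F ⟨e, he⟩ hF
      exact Set.mem_biUnion hv hvA
    have : (⋃ v ∈ e, {F | v ∈ Af F}) ∈ U :=
      Filter.mem_of_superset (hmemU ⟨e, he⟩) hsub
    obtain ⟨v, hv, hvU⟩ := (Ultrafilter.finite_biUnion_mem_iff hefin).mp this
    exact ⟨v, hv, hvU⟩
  · -- A ⊆ ⋃₀ M
    intro v hv
    have hsub : {F | v ∈ Af F} ⊆
        ⋃ m ∈ {e ∈ ℰ | v ∈ e}, {F | v ∈ Af F ∧ m ∈ Mf F} := by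
      intro F hF
      obtain ⟨m, hmM, hvm⟩ := hAM F hF
      exact Set.mem_biUnion ⟨hMsub F hmM, hvm⟩ ⟨hF, hmM⟩
    have : (⋃ m ∈ {e ∈ ℰ | v ∈ e}, {F | v ∈ Af F ∧ m ∈ Mf F}) ∈ U :=
      Filter.mem_of_superset hv hsub
    obtain ⟨m, ⟨hmE, hvm⟩, hmU⟩ :=
      (Ultrafilter.finite_biUnion_mem_iff (hlf v)).mp this
    refine ⟨m, ⟨hmE, Filter.mem_of_superset hmU fun F hF => hF.2⟩, hvm⟩
  · -- ncard
    rintro m ⟨hmE, hmU⟩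
    have hmfin := hfc m hmE
    -- existence of a vertex of m in A
    have hsub : {F | m ∈ Mf F} ⊆ ⋃ v ∈ m, {F | v ∈ Af F} := by
      intro F hF
      have h1 := hone F m hF
      obtain ⟨a, ha⟩ := Set.ncard_eq_one.mp h1
      have : a ∈ m ∩ Af F := ha ▸ rfl
      exact Set.mem_biUnion this.1 this.2
    obtain ⟨v, hvm, hvU⟩ := (Ultrafilter.finite_biUnion_mem_iff hmfin).mp
      (Filter.mem_of_superset hmU hsub)
    have heq : m ∩ {v | {F | v ∈ Af F} ∈ U} = {v} := by
      apply Set.eq_singleton_iff_unique_mem.mpr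
      refine ⟨⟨hvm, hvU⟩, ?_⟩
      rintro w ⟨hwm, hwU⟩
      by_contra hne
      obtain ⟨F, ⟨hF1, hF2⟩, hF3⟩ :=
        Ultrafilter.nonempty_of_mem (U.inter_mem (U.inter_mem hmU hvU) hwU)
      obtain ⟨a, ha⟩ := Set.ncard_eq_one.mp (hone F m hF1)
      have hva : v = a := by
        have : v ∈ m ∩ Af F := ⟨hvm, hF2⟩
        rw [ha] at this; exact this
      have hwa : w = a := by
        have : w ∈ m ∩ Af F := ⟨hwm, hF3⟩
        rw [ha] at this; exact this
      exact hne (hwa.trans hva.symm)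
    rw [heq]
    exact Set.ncard_singleton v
end
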